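/- Let A : ℝ → ℝ be Lipschitz with constant L, let b : ℝ → ℝ be locally integrable, let I = (x₀ − r, x₀ + r), let α be a median of b on I, let 1 < p < ∞, and let f := |I|^{−1/p}(χ_{I₁} − χ_{I₂} − a χ_I) with I₁ := {x ∈ I : b(x) > α}, I₂ := {x ∈ I : b(x) < α}, a := (|I₁| − |I₂|)/|I|. Then for every y ∈ ℝ with dist(y, I) > 0, |∫_I K(y,z)(b(z) − α) f(z) dz| ≤ (5/2) |I|^{−1/p} dist(y, I)^{−1} ∫_I |b(z) − α| dz. -/

import Mathlib

open MeasureTheory Filter Set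

/-!
The kernel is controlled by its real part: `|K(y,z)| ≤ |z - y|⁻¹ ≤ dist(y, I)⁻¹` for `z ∈ I`.
Since `α` is a median, `|I₁|` and `|I₂|` are at most `|I|/2`, so `|a| ≤ 1/2` and hence
`|f| ≤ (1 + 1 + 1/2) |I|^{-1/p}`. Integrating the product of these two pointwise bounds against
`|b - α|` gives the estimate.
-/

/-- The Cauchy kernel `K(x,y) = 1/(y - x + i(A(y) - A(x)))` associated to `A`. -/
noncomputable def cauchyKernel (A : ℝ → ℝ) (x y : ℝ) : ℂ :=
  ((y : ℂ) - (x : ℂ) + Complex.I * ((A y : ℂ) - (A x : ℂ)))⁻¹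

/-- `α` is a median of `b` on the bounded interval `I`. -/
def IsMedian (b : ℝ → ℝ) (I : Set ℝ) (α : ℝ) : Prop :=
  volume {x | x ∈ I ∧ α < b x} ≤ volume I / 2 ∧
  volume {x | x ∈ I ∧ b x < α} ≤ volume I / 2

theorem norm_cauchyKernel_le_inv_abs_sub (A : ℝ → ℝ) {x y : ℝ} (hxy : x ≠ y) :
    ‖cauchyKernel A x y‖ ≤ |y - x|⁻¹ := by
  rw [cauchyKernel, norm_inv]
  refine inv_anti₀ (abs_pos.2 (sub_ne_zero.2 hxy.symm)) ?_
  calc |y - x| = |((y : ℂ) - x + Complex.I * ((A y : ℂ) - A x)).re| := by simp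
    _ ≤ ‖(y : ℂ) - x + Complex.I * ((A y : ℂ) - A x)‖ := Complex.abs_re_le_norm _

theorem norm_cauchyKernel_le_inv_infDist (A : ℝ → ℝ) {s : Set ℝ} {x y : ℝ}
    (hx : 0 < Metric.infDist x s) (hy : y ∈ s) :
    ‖cauchyKernel A x y‖ ≤ (Metric.infDist x s)⁻¹ := by
  have hdist : Metric.infDist x s ≤ |y - x| := by
    simpa [Real.dist_eq, abs_sub_comm] using Metric.infDist_le_dist_of_mem (x := x) hy
  have hxy : x ≠ y := by rintro rfl; rw [sub_self, abs_zero] at hdist; linarith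
  exact (norm_cauchyKernel_le_inv_abs_sub A hxy).trans (inv_anti₀ hx hdist)

theorem IsMedian.abs_toReal_sub_toReal_le {b : ℝ → ℝ} {I : Set ℝ} {α : ℝ}
    (h : IsMedian b I α) (hI : volume I ≠ ⊤) :
    |(volume {x | x ∈ I ∧ α < b x}).toReal - (volume {x | x ∈ I ∧ b x < α}).toReal|
      ≤ (volume I).toReal / 2 := by
  have hhalf : (volume I / 2).toReal = (volume I).toReal / 2 := by
    rw [ENNReal.toReal_div, ENNReal.toReal_ofNat]
  have hne : volume I / 2 ≠ ⊤ := ENNReal.div_ne_top hI two_ne_zero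
  have h₁ := ENNReal.toReal_mono hne h.1
  have h₂ := ENNReal.toReal_mono hne h.2
  rw [hhalf] at h₁ h₂
  rw [abs_sub_le_iff]
  constructor <;> linarith [ENNReal.toReal_nonneg (a := volume {x | x ∈ I ∧ α < b x}),
    ENNReal.toReal_nonneg (a := volume {x | x ∈ I ∧ b x < α})]

theorem abs_indicator_one_sub_indicator_one_sub_mul_le {ι : Type*} (s t u : Set ι) (a : ℝ)
    (z : ι) :
    |s.indicator (fun _ => (1 : ℝ)) z - t.indicator (fun _ => 1) z - a * u.indicator (fun _ => 1) z|
      ≤ 2 + |a| := by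
  have hind : ∀ v : Set ι, |v.indicator (fun _ => (1 : ℝ)) z| ≤ 1 := fun v => by
    simpa using norm_indicator_le_norm_self (s := v) (fun _ => (1 : ℝ)) z
  calc _ ≤ |s.indicator (fun _ => (1 : ℝ)) z| + |t.indicator (fun _ => 1) z|
          + |a| * |u.indicator (fun _ => 1) z| := by
        rw [← abs_mul]; exact (abs_sub _ _).trans (add_le_add_left (abs_sub _ _) _)
    _ ≤ 1 + 1 + |a| * 1 := by gcongr <;> exact hind _
    _ = 2 + |a| := by ring

theorem median_test_function_upper_bound_general
    (A : ℝ → ℝ)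
    (b : ℝ → ℝ) (hb : MeasureTheory.LocallyIntegrable b volume)
    (x₀ r : ℝ) (hr : 0 < r)
    (I : Set ℝ) (hI : I = Set.Ioo (x₀ - r) (x₀ + r))
    (α : ℝ) (hα : IsMedian b I α)
    (p : ℝ)
    (I₁ I₂ : Set ℝ) (a : ℝ) (f : ℝ → ℝ)
    (hI₁ : I₁ = {x | x ∈ I ∧ α < b x})
    (hI₂ : I₂ = {x | x ∈ I ∧ b x < α})
    (ha : a = ((volume I₁).toReal - (volume I₂).toReal) / (2 * r))
    (hf : f = fun y => (2 * r) ^ (-1 / p) *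
        (Set.indicator I₁ (fun _ => (1 : ℝ)) y - Set.indicator I₂ (fun _ => (1 : ℝ)) y -
          a * Set.indicator I (fun _ => (1 : ℝ)) y)) :
    ∀ y : ℝ, 0 < Metric.infDist y I →
      ‖∫ z in I, cauchyKernel A y z * (((b z - α) : ℝ) : ℂ) * ((f z : ℝ) : ℂ)‖ ≤
        5 / 2 * (2 * r) ^ (-1 / p) * (Metric.infDist y I)⁻¹ * (∫ z in I, |b z - α|) := by
  intro y hy
  have hr2 : 0 < 2 * r := by linarith
  have hIvol : volume I = ENNReal.ofReal (2 * r) := by rw [hI, Real.volume_Ioo]; ring_nf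
  have ha_le : |a| ≤ 1 / 2 := by
    have := hα.abs_toReal_sub_toReal_le (hIvol ▸ ENNReal.ofReal_ne_top)
    rw [hIvol, ENNReal.toReal_ofReal hr2.le, ← hI₁, ← hI₂] at this
    rw [ha, abs_div, abs_of_pos hr2, div_le_iff₀ hr2]
    linarith
  have hf_le : ∀ z, |f z| ≤ 5 / 2 * (2 * r) ^ (-1 / p) := fun z => by
    rw [hf, abs_mul, abs_of_pos (by positivity), mul_comm]
    gcongr
    linarith [abs_indicator_one_sub_indicator_one_sub_mul_le I₁ I₂ I a z]
  have hb_int : IntegrableOn (fun z => |b z - α|) I := by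
    have hb_I : IntegrableOn b I := (hb.integrableOn_isCompact isCompact_Icc).mono_set
      (hI ▸ Ioo_subset_Icc_self)
    exact (hb_I.sub (integrableOn_const (hIvol ▸ ENNReal.ofReal_ne_top))).abs
  calc _ ≤ ∫ z in I, 5 / 2 * (2 * r) ^ (-1 / p) * (Metric.infDist y I)⁻¹ * |b z - α| := by
        refine norm_integral_le_of_norm_le (hb_int.const_mul _)
          (ae_restrict_of_forall_mem (hI ▸ measurableSet_Ioo) fun z hz => ?_)
        rw [norm_mul, norm_mul, Complex.norm_real, Complex.norm_real, Real.norm_eq_abs,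
          Real.norm_eq_abs, mul_right_comm, mul_comm (5 / 2 * _)]
        gcongr
        · exact norm_cauchyKernel_le_inv_infDist A hy hz
        · exact hf_le z
    _ = _ := integral_const_mul _ _

/-- Upper bound for `|∫_I K(y,z)(b(z) - α) f(z) dz|` for `y` with `dist(y, I) > 0`, where
`f = |I|^{-1/p}(χ_{I₁} - χ_{I₂} - a χ_I)` is the median test function. -/
theorem median_test_function_upper_bound
    (A : ℝ → ℝ) (L : ℝ) (hL : 0 < L)
    (hA : ∀ x₁ x₂ : ℝ, |A x₁ - A x₂| ≤ L * |x₁ - x₂|)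
    (b : ℝ → ℝ) (hb : MeasureTheory.LocallyIntegrable b volume)
    (x₀ r : ℝ) (hr : 0 < r)
    (I : Set ℝ) (hI : I = Set.Ioo (x₀ - r) (x₀ + r))
    (α : ℝ) (hα : IsMedian b I α)
    (p : ℝ) (hp : 1 < p)
    (I₁ I₂ : Set ℝ) (a : ℝ) (f : ℝ → ℝ)
    (hI₁ : I₁ = {x | x ∈ I ∧ α < b x})
    (hI₂ : I₂ = {x | x ∈ I ∧ b x < α})
    (ha : a = ((volume I₁).toReal - (volume I₂).toReal) / (2 * r))
    (hf : f = fun y => (2 * r) ^ (-1 / p) *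
        (Set.indicator I₁ (fun _ => (1 : ℝ)) y - Set.indicator I₂ (fun _ => (1 : ℝ)) y -
          a * Set.indicator I (fun _ => (1 : ℝ)) y)) :
    ∀ y : ℝ, 0 < Metric.infDist y I →
      ‖∫ z in I, cauchyKernel A y z * (((b z - α) : ℝ) : ℂ) * ((f z : ℝ) : ℂ)‖ ≤
        5 / 2 * (2 * r) ^ (-1 / p) * (Metric.infDist y I)⁻¹ * (∫ z in I, |b z - α|) :=
  median_test_function_upper_bound_general A b hb x₀ r hr I hI α hα p I₁ I₂ a f hI₁ hI₂ ha hf
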